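/- arXiv:2308.09533 — 3 statements merged into one kernel-verified Lean document; each statement's English description precedes it below -/
import Mathlib

section
/- Let ν_{m,i}^{even} and ν_{m,j}^{even} be the arity-1 components of two ordinary even cocycles at the same puncture m built from identical input scalars #ν¹(α) summing to 1, with ν_{m,i}^{even,1}(α) = #ν¹(α)·ℓ_m^i·α and similarly for j. Then the commutator of these two derivation-like maps satisfies [ν_{m,i}^{even}, ν_{m,j}^{even}]¹(α) = (j−i)·ℓ_m^{i+j}·α·#ν¹(α) for every indecomposable angle α around m, i.e., the 1-adic component of the bracket equals that of (j−i)·ν_{m,i+j}^{even}. -/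
/-- An angle around the puncture `m` in the cyclic quiver with `n` arrows: a pair
`(v, len)` of its start vertex `v : ZMod n` and its length `len` (number of
indecomposable angles it is composed of).  `ℓ_m^r` starting at `v` is `(v, r * n)`. -/
abbrev Ang (n : ℕ) := ZMod n × ℕ

/-- Additive extension of the input scalars `w` on indecomposable angles:
`#ν¹` of the angle of length `len` starting at `v`. -/
noncomputable def sumW {n : ℕ} (w : ZMod n → ℂ) (v : ZMod n) (len : ℕ) : ℂ :=
  ∑ t ∈ Finset.range len, w (v + t)

/-- The arity-1 component of the ordinary even cocycle `ν_{m,r}^{even}`: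
an angle `β` is sent to `#ν¹(β) · ℓ_m^r · β` (a scalar multiple of the angle
prolonged by `r` full turns), as an element of the free module on angles. -/
noncomputable def nuEven {n : ℕ} (w : ZMod n → ℂ) (r : ℕ) (a : Ang n) :
    Ang n →₀ ℂ :=
  Finsupp.single (a.1, a.2 + r * n) (sumW w a.1 a.2)

/-- Linear extension of an angle-valued map to formal linear combinations. -/
noncomputable def app {n : ℕ} (F : Ang n → (Ang n →₀ ℂ)) (x : Ang n →₀ ℂ) :
    Ang n →₀ ℂ :=
  x.sum fun a c => c • F a

lemma sum_cycle {n : ℕ} [NeZero n] (w : ZMod n → ℂ) (u : ZMod n) :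
    ∑ t ∈ Finset.range n, w (u + t) = ∑ x : ZMod n, w x := by
  refine Finset.sum_nbij' (fun t => u + (t : ZMod n)) (fun x => (x - u).val)
    (fun t _ => Finset.mem_univ _) (fun x _ => Finset.mem_range.2 (ZMod.val_lt _))
    ?_ ?_ (fun t _ => rfl)
  · intro t ht
    rw [add_sub_cancel_left, ZMod.val_natCast_of_lt (Finset.mem_range.1 ht)]
  · intro x _; simp [ZMod.natCast_val, ZMod.cast_id]

lemma sumW_add_turn {n : ℕ} [NeZero n] (w : ZMod n → ℂ)
    (hw : ∑ t : ZMod n, w t = 1) (v : ZMod n) (k : ℕ) :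
    sumW w v (k + n) = sumW w v k + 1 := by
  unfold sumW
  rw [Finset.sum_range_add]
  congr 1
  rw [← hw, ← sum_cycle w (v + k)]
  exact Finset.sum_congr rfl fun t _ => by push_cast; ring_nf

lemma sumW_turns {n : ℕ} [NeZero n] (w : ZMod n → ℂ)
    (hw : ∑ t : ZMod n, w t = 1) (v : ZMod n) (r : ℕ) :
    sumW w v (1 + r * n) = w v + r := by
  induction r with
  | zero => simp [sumW]
  | succ r ih =>
      have : 1 + (r + 1) * n = (1 + r * n) + n := by ring
      rw [this, sumW_add_turn w hw, ih]; push_cast; ring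

/-- Let `ν_{m,i}^{even}` and `ν_{m,j}^{even}` be the arity-1 components
of two ordinary even cocycles at the same puncture `m`, built from identical input
scalars `#ν¹ = w` summing to `1`, with `ν_{m,i}^{even,1}(α) = #ν¹(α)·ℓ_m^i·α` and
similarly for `j`.  Then for every indecomposable angle `α = (v, 1)` around `m`,
`[ν_{m,i}^{even}, ν_{m,j}^{even}]¹(α) = (j−i)·#ν¹(α)·ℓ_m^{i+j}·α`, i.e. the 1-adic
component of the bracket equals that of `(j−i)·ν_{m,i+j}^{even}`. -/
theorem stmt12
    (n : ℕ) [NeZero n] (w : ZMod n → ℂ)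
    (hw : ∑ t : ZMod n, w t = 1)
    (i j : ℕ) (v : ZMod n) :
    app (nuEven w i) (nuEven w j (v, 1)) - app (nuEven w j) (nuEven w i (v, 1))
      = ((j : ℂ) - (i : ℂ)) • Finsupp.single ((v, 1 + (i + j) * n) : Ang n) (w v) := by
  simp only [app, nuEven, Finsupp.sum_single_index, zero_smul]
  have h1 : sumW w v 1 = w v := by simp [sumW]
  rw [h1, sumW_turns w hw v j, sumW_turns w hw v i]
  rw [Finsupp.smul_single, Finsupp.smul_single, Finsupp.smul_single]
  have e1 : 1 + j * n + i * n = 1 + (i + j) * n := by ring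
  have e2 : 1 + i * n + j * n = 1 + (i + j) * n := by ring
  rw [e1, e2, ← Finsupp.single_sub]
  congr 1
  simp only [smul_eq_mul]
  ring
end

section
/- With the same setup, [ν_{m,i}^{even}, ν_{m,j}^{odd}]⁰ = j·ℓ_m^{i+j}: applying the derivation ν_{m,i}^{even,1} (which scales indecomposable angles around m by input scalars summing to 1, weighted by ℓ_m^i) to the 0-adic element ℓ_m^j (the sum of j-fold full turns around m starting at each incident arc) yields j·ℓ_m^{i+j}. -/
private lemma stmt13_range_sum (n : ℕ) [NeZero n] (f : ZMod n → ℂ) :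
    ∑ t ∈ Finset.range n, f t = ∑ t : ZMod n, f t := by
  refine Finset.sum_nbij' (fun t => (t : ZMod n)) (fun t => t.val) ?_ ?_ ?_ ?_ ?_ <;>
    simp [ZMod.val_lt, ZMod.val_cast_of_lt, Finset.mem_range]
  intro a ha; exact Nat.mod_eq_of_lt ha

private lemma stmt13_key (n : ℕ) [NeZero n] (w : ZMod n → ℂ)
    (hw : ∑ t : ZMod n, w t = 1) (v : ZMod n) (j : ℕ) :
    sumW w v (j * n) = j := by
  induction j with
  | zero => simp [sumW]
  | succ j ih =>
    have h : (j+1) * n = j * n + n := by ring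
    rw [sumW, h, Finset.sum_range_add]
    have h2 : ∀ t : ℕ, ((j * n + t : ℕ) : ZMod n) = (t : ℕ) := by
      intro t; push_cast [ZMod.natCast_self]; ring
    simp_rw [h2]
    have h3 : ∑ t ∈ Finset.range n, w (v + (t : ZMod n)) = 1 := by
      rw [stmt13_range_sum n (fun t => w (v + t)), ← hw]
      exact Fintype.sum_bijective (v + ·) ((Equiv.addLeft v).bijective) _ _ (fun t => rfl)
    rw [← sumW, ih, h3]
    push_cast; ring

/-- `[ν_{m,i}^{even}, ν_{m,j}^{odd}]⁰ = j·ℓ_m^{i+j}`: applying the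
derivation `ν_{m,i}^{even,1}` (which scales indecomposable angles around `m` by input
scalars summing to `1`, weighted by `ℓ_m^i`) to the 0-adic element `ℓ_m^j` (the sum of
`j`-fold full turns around `m` starting at each incident arc-end) yields
`j·ℓ_m^{i+j}`. -/
theorem stmt13
    (n : ℕ) [NeZero n] (w : ZMod n → ℂ)
    (hw : ∑ t : ZMod n, w t = 1)
    (i j : ℕ) :
    ∑ v : ZMod n, nuEven w i (v, j * n)
      = (j : ℂ) • ∑ v : ZMod n, Finsupp.single ((v, (i + j) * n) : Ang n) (1 : ℂ) := by
  simp only [nuEven, Finset.smul_sum]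
  refine Finset.sum_congr rfl fun v _ => ?_
  rw [stmt13_key n w hw v j, Finsupp.smul_single, smul_eq_mul, mul_one]
  congr 1
  ring
end

section
/- Cup product identity at chain level: for ν_{m,i}^{odd} with 0-adic component ℓ_m^i and vanishing higher components, and ν_{m,j}^{odd} likewise, the 0-adic component of the cup product is (ν_{m,i}^{odd} ∪ ν_{m,j}^{odd})⁰ = μ²(ℓ_m^i, ℓ_m^j) = ±ℓ_m^{i+j}; in particular, applied at the same puncture the cup product has the 0-adic component of ν_{m,i+j}^{odd}, and for distinct punctures m₁ ≠ m₂ the product μ²(ℓ_{m₁}^i, ℓ_{m₂}^j) = 0. -/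
/-- An angle of the gentle category: a triple `(m, v, len)` of the puncture `m` it
winds around, its start arc-end `v` (a residue mod `n m`, represented by a natural
number), and its length `len`.  Its target arc-end is `(v + len) % n m`. -/
abbrev GAng (M : Type*) := M × ℕ × ℕ

/-- The product `μ²(a, b) = (−1)^{|b|} a b` on basis angles, with values in formal
linear combinations: `a b` is the concatenation of `b` followed by `a`, defined when
both angles wind around the same puncture and the source of `a` is the target of `b`;
otherwise the angles are not composable and the product is `0`.  The degree `|b|` is
the parity of the length of `b`. -/
noncomputable def mu2single {M : Type*} [DecidableEq M] (n : M → ℕ)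
    (a b : GAng M) : GAng M →₀ ℂ :=
  if a.1 = b.1 ∧ a.2.1 % n a.1 = (b.2.1 + b.2.2) % n a.1 then
    ((-1 : ℂ) ^ b.2.2) • Finsupp.single ((b.1, b.2.1, a.2.2 + b.2.2) : GAng M) 1
  else 0

/-- cup product identity at chain level: for `ν_{m,i}^{odd}` with
0-adic component `ℓ_m^i` (the sum over all incident arc-ends `v` of the `i`-fold full
turn starting at `v`) and `ν_{m,j}^{odd}` likewise, the 0-adic component of the cup
product is `(ν_{m₁,i}^{odd} ∪ ν_{m₂,j}^{odd})⁰ = μ²(ℓ_{m₁}^i, ℓ_{m₂}^j)`.  For distinct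
punctures `m₁ ≠ m₂` the angles are not composable and `μ²(ℓ_{m₁}^i, ℓ_{m₂}^j) = 0`;
at the same puncture, `μ²(ℓ_m^i, ℓ_m^j) = ±ℓ_m^{i+j}` (sign `(−1)^{|ℓ_m^j|}`), the
0-adic component of `ν_{m,i+j}^{odd}`. -/
theorem stmt16
    {M : Type*} [DecidableEq M] (n : M → ℕ) (hn : ∀ m, 0 < n m)
    (m₁ m₂ : M) (i j : ℕ) :
    -- distinct punctures: the product vanishes
    (m₁ ≠ m₂ →
      ∑ v ∈ Finset.range (n m₁), ∑ v' ∈ Finset.range (n m₂),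
        mu2single n ((m₁, v, i * n m₁) : GAng M) ((m₂, v', j * n m₂) : GAng M) = 0)
    -- the same puncture: the product is ±ℓ_{m₁}^{i+j}
    ∧ (∑ v ∈ Finset.range (n m₁), ∑ v' ∈ Finset.range (n m₁),
        mu2single n ((m₁, v, i * n m₁) : GAng M) ((m₁, v', j * n m₁) : GAng M)
      = ((-1 : ℂ) ^ (j * n m₁)) •
          ∑ v ∈ Finset.range (n m₁),
            Finsupp.single ((m₁, v, (i + j) * n m₁) : GAng M) (1 : ℂ)) := by
  constructor
  · intro h
    apply Finset.sum_eq_zero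
    intro v _
    apply Finset.sum_eq_zero
    intro v' _
    simp [mu2single, h]
  · rw [Finset.smul_sum]
    apply Finset.sum_congr rfl
    intro v hv
    rw [Finset.sum_eq_single v]
    · have hvlt := Finset.mem_range.mp hv
      have : (v : ℕ) % n m₁ = (v + j * n m₁) % n m₁ := by
        simp [Nat.add_mul_mod_self_right, Nat.mod_eq_of_lt hvlt]
      simp only [mu2single, this, and_self, if_true]
      have : i * n m₁ + j * n m₁ = (i + j) * n m₁ := (add_mul i j (n m₁)).symm
      simp [this]
    · intro v' hv' hne
      have hvlt := Finset.mem_range.mp hv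
      have hv'lt := Finset.mem_range.mp hv'
      have : ¬ ((v : ℕ) % n m₁ = v' % n m₁) := by
        rw [Nat.mod_eq_of_lt hvlt, Nat.mod_eq_of_lt hv'lt]
        exact fun h => hne h.symm
      simp [mu2single, this]
    · intro h; exact absurd hv h
end
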